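/- For the Fubini–Study metric on ℂP¹ in an affine coordinate z (potential log(1+|z|²), inverse metric g^{1\bar 1} = (1+|z|²)²), the Kähler Laplacian Δ = (1+|z|²)² ∂²/∂z∂\bar z satisfies: for every k ≥ 1 there is a monic degree-k polynomial p_k with real coefficients and zero constant term such that Δ^k φ(0) = p_k(Δ_c)φ(0) for all smooth φ near 0, where Δ_c = ∂²/∂z∂\bar z. -/

import Mathlib

/-- The Wirtinger derivative `∂/∂z` of a function on `ℂ`. -/
noncomputable def dz1 (f : ℂ → ℂ) : ℂ → ℂ :=
  fun z => (fderiv ℝ f z 1 - Complex.I * fderiv ℝ f z Complex.I) / 2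

/-- The Wirtinger derivative `∂/∂\bar z` of a function on `ℂ`. -/
noncomputable def dzbar1 (f : ℂ → ℂ) : ℂ → ℂ :=
  fun z => (fderiv ℝ f z 1 + Complex.I * fderiv ℝ f z Complex.I) / 2

/-- The complex Euclidean Laplacian `Δ_c = ∂²/(∂z ∂\bar z)` on `ℂ`. -/
noncomputable def lapC1 (f : ℂ → ℂ) : ℂ → ℂ := dzbar1 (dz1 f)

/-- The Kähler Laplacian `Δ = (1 + |z|²)² ∂²/(∂z ∂\bar z)` of the Fubini–Study metric on
`ℂP¹` in an affine coordinate (potential `log(1 + |z|²)`). -/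
noncomputable def kLapFS1 (f : ℂ → ℂ) : ℂ → ℂ :=
  fun z => ((1 + Complex.normSq z : ℝ) : ℂ) ^ 2 * lapC1 f z

open Complex ComplexConjugate

namespace DeltaProp

variable {f g h : ℂ → ℂ} {z : ℂ}

/-! ### Basic API for the Wirtinger derivatives -/

lemma smooth_fderiv_apply (hf : ContDiff ℝ (⊤ : ℕ∞) f) (v : ℂ) :
    ContDiff ℝ (⊤ : ℕ∞) (fun z => fderiv ℝ f z v) :=
  (hf.fderiv_right ((by simp))).clm_apply contDiff_const

lemma dz1_smooth (hf : ContDiff ℝ (⊤ : ℕ∞) f) : ContDiff ℝ (⊤ : ℕ∞) (dz1 f) :=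
  (((smooth_fderiv_apply hf 1).sub
    (contDiff_const.mul (smooth_fderiv_apply hf Complex.I)))).div_const 2

lemma dzbar1_smooth (hf : ContDiff ℝ (⊤ : ℕ∞) f) : ContDiff ℝ (⊤ : ℕ∞) (dzbar1 f) :=
  (((smooth_fderiv_apply hf 1).add
    (contDiff_const.mul (smooth_fderiv_apply hf Complex.I)))).div_const 2

lemma lapC1_smooth (hf : ContDiff ℝ (⊤ : ℕ∞) f) : ContDiff ℝ (⊤ : ℕ∞) (lapC1 f) :=
  dzbar1_smooth (dz1_smooth hf)

lemma lapC1_iter_smooth (hf : ContDiff ℝ (⊤ : ℕ∞) f) (n : ℕ) : ContDiff ℝ (⊤ : ℕ∞) (lapC1^[n] f) := by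
  induction n with
  | zero => exact hf
  | succ n ih => rw [Function.iterate_succ_apply']; exact lapC1_smooth ih

lemma dz1_add (hf : DifferentiableAt ℝ f z) (hg : DifferentiableAt ℝ g z) :
    dz1 (fun w => f w + g w) z = dz1 f z + dz1 g z := by
  simp only [dz1, fderiv_fun_add hf hg, ContinuousLinearMap.add_apply]; ring

lemma dzbar1_add (hf : DifferentiableAt ℝ f z) (hg : DifferentiableAt ℝ g z) :
    dzbar1 (fun w => f w + g w) z = dzbar1 f z + dzbar1 g z := by
  simp only [dzbar1, fderiv_fun_add hf hg, ContinuousLinearMap.add_apply]; ring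

lemma dz1_const_mul (c : ℂ) (hf : DifferentiableAt ℝ f z) :
    dz1 (fun w => c * f w) z = c * dz1 f z := by
  simp only [dz1, fderiv_const_mul hf c, ContinuousLinearMap.smul_apply, smul_eq_mul]; ring

lemma dzbar1_const_mul (c : ℂ) (hf : DifferentiableAt ℝ f z) :
    dzbar1 (fun w => c * f w) z = c * dzbar1 f z := by
  simp only [dzbar1, fderiv_const_mul hf c, ContinuousLinearMap.smul_apply, smul_eq_mul]; ring

lemma dz1_mul (hf : DifferentiableAt ℝ f z) (hg : DifferentiableAt ℝ g z) :
    dz1 (fun w => f w * g w) z = dz1 f z * g z + f z * dz1 g z := by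
  simp only [dz1, fderiv_fun_mul hf hg, ContinuousLinearMap.add_apply,
    ContinuousLinearMap.smul_apply, smul_eq_mul]; ring

lemma dzbar1_mul (hf : DifferentiableAt ℝ f z) (hg : DifferentiableAt ℝ g z) :
    dzbar1 (fun w => f w * g w) z = dzbar1 f z * g z + f z * dzbar1 g z := by
  simp only [dzbar1, fderiv_fun_mul hf hg, ContinuousLinearMap.add_apply,
    ContinuousLinearMap.smul_apply, smul_eq_mul]; ring

lemma dz1_id : dz1 (fun w : ℂ => w) z = 1 := by
  simp only [dz1, fderiv_id']
  simp [Complex.ext_iff]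

lemma dzbar1_id : dzbar1 (fun w : ℂ => w) z = 0 := by
  simp only [dzbar1, fderiv_id']
  simp [Complex.ext_iff]

lemma fderiv_conj_eq : fderiv ℝ (fun w : ℂ => conj w) z = Complex.conjCLE := by
  rw [show (fun w : ℂ => conj w) = ⇑Complex.conjCLE from funext fun w => (Complex.conjCLE_apply w).symm]
  exact Complex.conjCLE.fderiv

lemma diffAt_conj : DifferentiableAt ℝ (fun w : ℂ => conj w) z := by
  rw [show (fun w : ℂ => conj w) = ⇑Complex.conjCLE from funext fun w => (Complex.conjCLE_apply w).symm]
  exact Complex.conjCLE.differentiableAt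

lemma smooth_conj : ContDiff ℝ (⊤ : ℕ∞) (fun z : ℂ => conj z) := by
  rw [show (fun w : ℂ => conj w) = ⇑Complex.conjCLE from funext fun w => (Complex.conjCLE_apply w).symm]
  exact Complex.conjCLE.contDiff

lemma dz1_conj : dz1 (fun w : ℂ => conj w) z = 0 := by
  simp only [dz1, fderiv_conj_eq, Complex.conjCLE_apply]
  simp [Complex.ext_iff]

lemma dzbar1_conj : dzbar1 (fun w : ℂ => conj w) z = 1 := by
  simp only [dzbar1, fderiv_conj_eq, Complex.conjCLE_apply]
  simp [Complex.ext_iff]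

lemma dz1_X_mul (hh : DifferentiableAt ℝ h z) :
    dz1 (fun w => w * h w) z = h z + z * dz1 h z := by
  rw [dz1_mul differentiableAt_fun_id hh, dz1_id]; ring

lemma dzbar1_X_mul (hh : DifferentiableAt ℝ h z) :
    dzbar1 (fun w => w * h w) z = z * dzbar1 h z := by
  rw [dzbar1_mul differentiableAt_fun_id hh, dzbar1_id]; ring

lemma dz1_Xbar_mul (hh : DifferentiableAt ℝ h z) :
    dz1 (fun w => conj w * h w) z = conj z * dz1 h z := by
  rw [dz1_mul diffAt_conj hh, dz1_conj]; ring

lemma dzbar1_Xbar_mul (hh : DifferentiableAt ℝ h z) :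
    dzbar1 (fun w => conj w * h w) z = h z + conj z * dzbar1 h z := by
  rw [dzbar1_mul diffAt_conj hh, dzbar1_conj]; ring

/-! ### Symmetry of second derivatives: the Wirtinger derivatives commute -/

lemma fderiv_lincomb (A B : ℂ → ℂ) (hA : DifferentiableAt ℝ A z)
    (hB : DifferentiableAt ℝ B z) (c d u : ℂ) :
    fderiv ℝ (fun w => c * A w + d * B w) z u = c * fderiv ℝ A z u + d * fderiv ℝ B z u := by
  rw [fderiv_fun_add (hA.const_mul c) (hB.const_mul d), fderiv_const_mul hA, fderiv_const_mul hB]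
  simp

lemma fderiv_fderiv_apply (hf : ContDiff ℝ (⊤ : ℕ∞) f) (v u : ℂ) :
    fderiv ℝ (fun w => fderiv ℝ f w v) z u = fderiv ℝ (fderiv ℝ f) z u v := by
  have hD : DifferentiableAt ℝ (fderiv ℝ f) z :=
    ((hf.fderiv_right (m := (⊤ : ℕ∞)) (by simp)).differentiable (by simp)) z
  rw [fderiv_clm_apply hD (differentiableAt_const v)]
  simp

lemma fderiv_dz1_apply (hf : ContDiff ℝ (⊤ : ℕ∞) f) (u : ℂ) :
    fderiv ℝ (dz1 f) z u =
      (fderiv ℝ (fderiv ℝ f) z u 1 - Complex.I * fderiv ℝ (fderiv ℝ f) z u Complex.I) / 2 := by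
  have e : dz1 f = fun w => (1/2 : ℂ) * (fderiv ℝ f w 1) +
      (-(Complex.I)/2) * (fderiv ℝ f w Complex.I) := by
    funext w; show (fderiv ℝ f w 1 - Complex.I * fderiv ℝ f w Complex.I) / 2 = _; ring
  rw [e, fderiv_lincomb _ _ ((smooth_fderiv_apply hf 1).differentiable (by simp) z)
    ((smooth_fderiv_apply hf Complex.I).differentiable (by simp) z),
    fderiv_fderiv_apply hf, fderiv_fderiv_apply hf]
  ring

lemma fderiv_dzbar1_apply (hf : ContDiff ℝ (⊤ : ℕ∞) f) (u : ℂ) :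
    fderiv ℝ (dzbar1 f) z u =
      (fderiv ℝ (fderiv ℝ f) z u 1 + Complex.I * fderiv ℝ (fderiv ℝ f) z u Complex.I) / 2 := by
  have e : dzbar1 f = fun w => (1/2 : ℂ) * (fderiv ℝ f w 1) +
      (Complex.I/2) * (fderiv ℝ f w Complex.I) := by
    funext w; show (fderiv ℝ f w 1 + Complex.I * fderiv ℝ f w Complex.I) / 2 = _; ring
  rw [e, fderiv_lincomb _ _ ((smooth_fderiv_apply hf 1).differentiable (by simp) z)
    ((smooth_fderiv_apply hf Complex.I).differentiable (by simp) z),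
    fderiv_fderiv_apply hf, fderiv_fderiv_apply hf]
  ring

/-- Commutation of the Wirtinger derivatives on smooth functions. -/
lemma dz1_dzbar1_comm (hf : ContDiff ℝ (⊤ : ℕ∞) f) : dz1 (dzbar1 f) = dzbar1 (dz1 f) := by
  funext z
  have hsymm : fderiv ℝ (fderiv ℝ f) z 1 Complex.I = fderiv ℝ (fderiv ℝ f) z Complex.I 1 :=
    (hf.contDiffAt.isSymmSndFDerivAt (by rw [minSmoothness_of_isRCLikeNormedField]; exact WithTop.coe_le_coe.2 le_top)) 1 Complex.I
  show (fderiv ℝ (dzbar1 f) z 1 - Complex.I * fderiv ℝ (dzbar1 f) z Complex.I) / 2 =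
    (fderiv ℝ (dz1 f) z 1 + Complex.I * fderiv ℝ (dz1 f) z Complex.I) / 2
  rw [fderiv_dzbar1_apply hf, fderiv_dzbar1_apply hf, fderiv_dz1_apply hf, fderiv_dz1_apply hf]
  linear_combination (Complex.I / 2) * hsymm

lemma dz1_lapC1_comm (hf : ContDiff ℝ (⊤ : ℕ∞) f) : dz1 (lapC1 f) = lapC1 (dz1 f) :=
  dz1_dzbar1_comm (dz1_smooth hf)

lemma dzbar1_lapC1_comm (hf : ContDiff ℝ (⊤ : ℕ∞) f) : dzbar1 (lapC1 f) = lapC1 (dzbar1 f) :=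
  (congrArg dzbar1 (dz1_dzbar1_comm hf)).symm

/-! ### The Laplacian: function-level identities -/

lemma lapC1_add (hf : ContDiff ℝ (⊤ : ℕ∞) f) (hg : ContDiff ℝ (⊤ : ℕ∞) g) :
    lapC1 (fun w => f w + g w) = fun z => lapC1 f z + lapC1 g z := by
  funext z
  have e : dz1 (fun w => f w + g w) = fun w => dz1 f w + dz1 g w :=
    funext fun w => dz1_add (hf.differentiable (by simp) w) (hg.differentiable (by simp) w)
  show dzbar1 (dz1 fun w => f w + g w) z = _
  rw [e]
  exact dzbar1_add ((dz1_smooth hf).differentiable (by simp) z)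
    ((dz1_smooth hg).differentiable (by simp) z)

lemma lapC1_const_mul (c : ℂ) (hf : ContDiff ℝ (⊤ : ℕ∞) f) :
    lapC1 (fun w => c * f w) = fun z => c * lapC1 f z := by
  funext z
  have e : dz1 (fun w => c * f w) = fun w => c * dz1 f w :=
    funext fun w => dz1_const_mul c (hf.differentiable (by simp) w)
  show dzbar1 (dz1 fun w => c * f w) z = _
  rw [e]
  exact dzbar1_const_mul c ((dz1_smooth hf).differentiable (by simp) z)

lemma lapC1_X_mul (hh : ContDiff ℝ (⊤ : ℕ∞) h) :
    lapC1 (fun w => w * h w) = fun z => dzbar1 h z + z * lapC1 h z := by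
  funext z
  have e : dz1 (fun w => w * h w) = fun w => h w + w * dz1 h w :=
    funext fun w => dz1_X_mul (hh.differentiable (by simp) w)
  show dzbar1 (dz1 fun w => w * h w) z = _
  rw [e, dzbar1_add (hh.differentiable (by simp) z)
    ((differentiable_fun_id.fun_mul ((dz1_smooth hh).differentiable (by simp))) z),
    dzbar1_X_mul ((dz1_smooth hh).differentiable (by simp) z)]
  rfl

lemma lapC1_Xbar_mul (hh : ContDiff ℝ (⊤ : ℕ∞) h) :
    lapC1 (fun w => conj w * h w) = fun z => dz1 h z + conj z * lapC1 h z := by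
  funext z
  have e : dz1 (fun w => conj w * h w) = fun w => conj w * dz1 h w :=
    funext fun w => dz1_Xbar_mul (hh.differentiable (by simp) w)
  show dzbar1 (dz1 fun w => conj w * h w) z = _
  rw [e, dzbar1_Xbar_mul ((dz1_smooth hh).differentiable (by simp) z)]
  rfl

lemma lapC1_XXbar_mul (hg : ContDiff ℝ (⊤ : ℕ∞) g) :
    lapC1 (fun w => w * conj w * g w) =
      fun z => g z + z * dz1 g z + conj z * dzbar1 g z + z * conj z * lapC1 g z := by
  have e : (fun w => w * conj w * g w) = fun w => w * (conj w * g w) :=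
    funext fun w => mul_assoc _ _ _
  rw [e, lapC1_X_mul (smooth_conj.mul hg)]
  funext z
  rw [dzbar1_Xbar_mul (hg.differentiable (by simp) z), lapC1_Xbar_mul hg]
  ring

/-- The main function-level identity for iterated Laplacians of `z z̄ · g`. -/
lemma iter_XXbar (g : ℂ → ℂ) (hg : ContDiff ℝ (⊤ : ℕ∞) g) (n : ℕ) :
    lapC1^[n+1] (fun w => w * conj w * g w) = fun z =>
      ((n : ℂ)+1)^2 * lapC1^[n] g z + (((n : ℂ)+1) * (z * dz1 (lapC1^[n] g) z)
      + (((n : ℂ)+1) * (conj z * dzbar1 (lapC1^[n] g) z) + z * conj z * lapC1^[n+1] g z)) := by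
  induction n with
  | zero =>
    rw [Function.iterate_one, lapC1_XXbar_mul hg]
    funext z
    simp only [Function.iterate_zero_apply, Function.iterate_one, Nat.cast_zero]
    ring
  | succ n ih =>
    have hLg : ContDiff ℝ (⊤ : ℕ∞) (lapC1^[n] g) := lapC1_iter_smooth hg n
    have hLg1 : ContDiff ℝ (⊤ : ℕ∞) (lapC1^[n+1] g) := lapC1_iter_smooth hg (n+1)
    have hd1 : ContDiff ℝ (⊤ : ℕ∞) (dz1 (lapC1^[n] g)) := dz1_smooth hLg
    have hd2 : ContDiff ℝ (⊤ : ℕ∞) (dzbar1 (lapC1^[n] g)) := dzbar1_smooth hLg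
    set c : ℂ := (n : ℂ) + 1 with hc
    have hA : ContDiff ℝ (⊤ : ℕ∞) (fun z : ℂ => c^2 * lapC1^[n] g z) := contDiff_const.mul hLg
    have hzd1 : ContDiff ℝ (⊤ : ℕ∞) (fun z : ℂ => z * dz1 (lapC1^[n] g) z) := contDiff_id.mul hd1
    have hzd2 : ContDiff ℝ (⊤ : ℕ∞) (fun z : ℂ => conj z * dzbar1 (lapC1^[n] g) z) :=
      smooth_conj.mul hd2
    have hB : ContDiff ℝ (⊤ : ℕ∞) (fun z : ℂ => c * (z * dz1 (lapC1^[n] g) z)) :=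
      contDiff_const.mul hzd1
    have hC : ContDiff ℝ (⊤ : ℕ∞) (fun z : ℂ => c * (conj z * dzbar1 (lapC1^[n] g) z)) :=
      contDiff_const.mul hzd2
    have hD : ContDiff ℝ (⊤ : ℕ∞) (fun z : ℂ => z * conj z * lapC1^[n+1] g z) :=
      (contDiff_id.mul smooth_conj).mul hLg1
    rw [Function.iterate_succ_apply', ih]
    -- compute the Laplacian of each of the four summands
    have eA : lapC1 (fun z : ℂ => c^2 * lapC1^[n] g z) =
        fun z => c^2 * lapC1^[n+1] g z := by
      rw [lapC1_const_mul (c^2) hLg]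
      funext z; rw [Function.iterate_succ_apply']
    have eB : lapC1 (fun z : ℂ => c * (z * dz1 (lapC1^[n] g) z)) =
        fun z => c * (lapC1^[n+1] g z + z * dz1 (lapC1^[n+1] g) z) := by
      rw [lapC1_const_mul c hzd1, lapC1_X_mul hd1]
      funext z
      have h1 : dzbar1 (dz1 (lapC1^[n] g)) = lapC1^[n+1] g := by
        rw [Function.iterate_succ_apply']; rfl
      have h2 : lapC1 (dz1 (lapC1^[n] g)) = dz1 (lapC1^[n+1] g) := by
        rw [Function.iterate_succ_apply', ← dz1_lapC1_comm hLg]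
      rw [h1, h2]
    have eC : lapC1 (fun z : ℂ => c * (conj z * dzbar1 (lapC1^[n] g) z)) =
        fun z => c * (lapC1^[n+1] g z + conj z * dzbar1 (lapC1^[n+1] g) z) := by
      rw [lapC1_const_mul c hzd2, lapC1_Xbar_mul hd2]
      funext z
      have h1 : dz1 (dzbar1 (lapC1^[n] g)) = lapC1^[n+1] g := by
        rw [Function.iterate_succ_apply', dz1_dzbar1_comm hLg]; rfl
      have h2 : lapC1 (dzbar1 (lapC1^[n] g)) = dzbar1 (lapC1^[n+1] g) := by
        rw [Function.iterate_succ_apply', ← dzbar1_lapC1_comm hLg]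
      rw [h1, h2]
    have eD : lapC1 (fun z : ℂ => z * conj z * lapC1^[n+1] g z) =
        fun z => lapC1^[n+1] g z + z * dz1 (lapC1^[n+1] g) z
          + conj z * dzbar1 (lapC1^[n+1] g) z + z * conj z * lapC1^[n+2] g z := by
      rw [lapC1_XXbar_mul hLg1]
      funext z; rw [show lapC1^[n+2] g = lapC1 (lapC1^[n+1] g) from Function.iterate_succ_apply' ..]
    rw [lapC1_add hA (hB.add (hC.add hD)), lapC1_add hB (hC.add hD), lapC1_add hC hD,
      eA, eB, eC, eD]
    funext z
    push_cast
    ring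

/-- The key pointwise identity at the origin. -/
lemma key0 (g : ℂ → ℂ) (hg : ContDiff ℝ (⊤ : ℕ∞) g) (m : ℕ) :
    lapC1^[m] (fun w => w * conj w * g w) 0 = (m : ℂ)^2 * lapC1^[m-1] g 0 := by
  cases m with
  | zero => simp
  | succ n =>
    rw [iter_XXbar g hg n]
    simp only [map_zero, mul_zero, zero_mul, add_zero, mul_comm]
    push_cast
    ring

/-! ### The Fubini–Study Laplacian -/

lemma kLap_eq (f : ℂ → ℂ) : kLapFS1 f = fun z => lapC1 f z +
    (2 * (z * conj z * lapC1 f z) + (z * conj z * (z * conj z * lapC1 f z))) := by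
  funext z
  show ((1 + Complex.normSq z : ℝ) : ℂ) ^ 2 * lapC1 f z = _
  have h : ((1 + Complex.normSq z : ℝ) : ℂ) = 1 + z * conj z := by
    push_cast
    rw [Complex.mul_conj]
  rw [h]; ring

lemma kLap_smooth (hf : ContDiff ℝ (⊤ : ℕ∞) f) : ContDiff ℝ (⊤ : ℕ∞) (kLapFS1 f) := by
  rw [kLap_eq]
  have hB : ContDiff ℝ (⊤ : ℕ∞) (fun z : ℂ => z * conj z * lapC1 f z) :=
    (contDiff_id.mul smooth_conj).mul (lapC1_smooth hf)
  exact (lapC1_smooth hf).add ((contDiff_const.mul hB).add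
    ((contDiff_id.mul smooth_conj).mul hB))

lemma kLap_iter_smooth (hf : ContDiff ℝ (⊤ : ℕ∞) f) (n : ℕ) : ContDiff ℝ (⊤ : ℕ∞) (kLapFS1^[n] f) := by
  induction n with
  | zero => exact hf
  | succ n ih => rw [Function.iterate_succ_apply']; exact kLap_smooth ih

lemma lapC1_iter_add (hf : ContDiff ℝ (⊤ : ℕ∞) f) (hg : ContDiff ℝ (⊤ : ℕ∞) g) (m : ℕ) :
    lapC1^[m] (fun z => f z + g z) = fun z => lapC1^[m] f z + lapC1^[m] g z := by
  induction m with
  | zero => rfl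
  | succ m ih =>
    rw [Function.iterate_succ_apply', ih,
      lapC1_add (lapC1_iter_smooth hf m) (lapC1_iter_smooth hg m)]
    funext z
    rw [Function.iterate_succ_apply', Function.iterate_succ_apply']

lemma lapC1_iter_const_mul (c : ℂ) (hf : ContDiff ℝ (⊤ : ℕ∞) f) (m : ℕ) :
    lapC1^[m] (fun z => c * f z) = fun z => c * lapC1^[m] f z := by
  induction m with
  | zero => rfl
  | succ m ih =>
    rw [Function.iterate_succ_apply', ih, lapC1_const_mul c (lapC1_iter_smooth hf m)]
    funext z
    rw [Function.iterate_succ_apply']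

/-- One step of the Fubini–Study Laplacian, measured by euclidean Laplacians at `0`. -/
lemma step (f : ℂ → ℂ) (hf : ContDiff ℝ (⊤ : ℕ∞) f) (m : ℕ) :
    lapC1^[m] (kLapFS1 f) 0 =
      lapC1^[m] (lapC1 f) 0 + 2 * ((m : ℂ)^2 * lapC1^[m-1] (lapC1 f) 0)
      + (m : ℂ)^2 * (((m-1 : ℕ) : ℂ)^2 * lapC1^[m-1-1] (lapC1 f) 0) := by
  have hL : ContDiff ℝ (⊤ : ℕ∞) (lapC1 f) := lapC1_smooth hf
  have hB : ContDiff ℝ (⊤ : ℕ∞) (fun z : ℂ => z * conj z * lapC1 f z) :=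
    (contDiff_id.mul smooth_conj).mul hL
  have hB2 : ContDiff ℝ (⊤ : ℕ∞) (fun z : ℂ => (2:ℂ) * (z * conj z * lapC1 f z)) :=
    contDiff_const.mul hB
  have hC2 : ContDiff ℝ (⊤ : ℕ∞) (fun z : ℂ => z * conj z * (z * conj z * lapC1 f z)) :=
    (contDiff_id.mul smooth_conj).mul hB
  have e1 : lapC1^[m] (fun z => lapC1 f z + ((2:ℂ) * (z * conj z * lapC1 f z)
      + z * conj z * (z * conj z * lapC1 f z))) 0
      = lapC1^[m] (lapC1 f) 0 + lapC1^[m] (fun z => (2:ℂ) * (z * conj z * lapC1 f z)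
        + z * conj z * (z * conj z * lapC1 f z)) 0 :=
    congrFun (lapC1_iter_add hL (hB2.add hC2) m) 0
  have e2 : lapC1^[m] (fun z => (2:ℂ) * (z * conj z * lapC1 f z)
      + z * conj z * (z * conj z * lapC1 f z)) 0
      = lapC1^[m] (fun z => (2:ℂ) * (z * conj z * lapC1 f z)) 0
        + lapC1^[m] (fun z => z * conj z * (z * conj z * lapC1 f z)) 0 :=
    congrFun (lapC1_iter_add hB2 hC2 m) 0
  have e3 : lapC1^[m] (fun z => (2:ℂ) * (z * conj z * lapC1 f z)) 0
      = 2 * lapC1^[m] (fun z => z * conj z * lapC1 f z) 0 :=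
    congrFun (lapC1_iter_const_mul 2 hB m) 0
  have kB := key0 (lapC1 f) hL m
  have kC := key0 (fun z : ℂ => z * conj z * lapC1 f z) hB m
  have kB' := key0 (lapC1 f) hL (m-1)
  rw [kLap_eq, e1, e2, e3, kB, kC, kB']
  ring

/-! ### The coefficient recursion -/

def bco : ℕ → ℕ → ℕ → ℝ
  | 0, m, l => if l = m then 1 else 0
  | j+1, m, l => bco j (m+1) l + 2*(m : ℝ)^2 * bco j m l
      + (m : ℝ)^2 * ((m-1 : ℕ) : ℝ)^2 * bco j (m-1) l

lemma bco_eq_zero : ∀ j m l, m + j < l → bco j m l = 0 := by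
  intro j
  induction j with
  | zero => intro m l hl; simp only [bco]; rw [if_neg]; omega
  | succ j ih =>
    intro m l hl
    simp only [bco]
    rw [ih (m+1) l (by omega), ih m l (by omega), ih (m-1) l (by omega)]
    ring

lemma bco_top : ∀ j m, bco j m (m + j) = 1 := by
  intro j
  induction j with
  | zero => intro m; simp [bco]
  | succ j ih =>
    intro m
    simp only [bco]
    have h1 : bco j (m+1) (m + (j+1)) = 1 := by
      have : m + (j + 1) = (m + 1) + j := by omega
      rw [this]; exact ih (m+1)
    rw [h1, bco_eq_zero j m (m + (j+1)) (by omega), bco_eq_zero j (m-1) (m + (j+1)) (by omega)]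
    ring

lemma bco_bot : ∀ j, 1 ≤ j → ∀ m, bco j m 0 = 0 := by
  intro j
  induction j with
  | zero => omega
  | succ j ih =>
    intro _ m
    rcases Nat.eq_zero_or_pos j with hj | hj
    · subst hj
      match m with
      | 0 => simp [bco]
      | 1 => simp [bco]
      | (m+2) => simp [bco]
    · simp only [bco]
      rw [ih hj (m+1), ih hj m, ih hj (m-1)]
      ring

/-- Abstract expansion along the recursion. -/
lemma coeff_expand (T0 : ℕ → ℂ) (T : ℕ → ℕ → ℂ) (h0 : ∀ m, T 0 m = T0 m)
    (hrec : ∀ j m, T (j+1) m = T j (m+1) + 2*(m : ℂ)^2 * T j m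
      + (m : ℂ)^2 * ((m-1 : ℕ) : ℂ)^2 * T j (m-1)) :
    ∀ j m, T j m = ∑ l ∈ Finset.range (m + j + 1), (bco j m l : ℂ) * T0 l := by
  have pad : ∀ (j' m' N : ℕ), m' + j' < N →
      ∑ l ∈ Finset.range (m' + j' + 1), (bco j' m' l : ℂ) * T0 l
        = ∑ l ∈ Finset.range N, (bco j' m' l : ℂ) * T0 l := by
    intro j' m' N hN
    apply Finset.sum_subset (Finset.range_subset_range.2 (by omega))
    intro l hl hnl
    rw [bco_eq_zero j' m' l (by simp only [Finset.mem_range] at hl hnl; omega)]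
    simp
  intro j
  induction j with
  | zero =>
    intro m
    rw [h0, Finset.sum_eq_single m]
    · simp [bco]
    · intro l _ hlm; simp [bco, hlm]
    · intro hm; exact absurd (Finset.self_mem_range_succ m) hm
  | succ j ih =>
    intro m
    rw [hrec j m, ih (m+1), ih m, ih (m-1),
      pad j (m+1) (m + (j+1) + 1) (by omega), pad j m (m + (j+1) + 1) (by omega),
      pad j (m-1) (m + (j+1) + 1) (by omega),
      Finset.mul_sum, Finset.mul_sum, ← Finset.sum_add_distrib, ← Finset.sum_add_distrib]
    apply Finset.sum_congr rfl
    intro l _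
    simp only [bco]
    push_cast
    ring

end DeltaProp

open DeltaProp in
/-- the Δ-property of `(ℂP¹, g_FS)`: for every `k ≥ 1` there is a monic
degree-`k` polynomial `p_k` with real coefficients and zero constant term such that
`Δ^k φ(0) = p_k(Δ_c) φ(0)` for every smooth `φ`. -/
theorem delta_property_CP1 (k : ℕ) (hk : 1 ≤ k) :
    ∃ a : ℕ → ℝ, a k = 1 ∧ a 0 = 0 ∧
      ∀ φ : ℂ → ℂ, ContDiff ℝ (⊤ : ℕ∞) φ →
        (kLapFS1^[k] φ) 0 = ∑ l ∈ Finset.range (k + 1), (a l : ℂ) * (lapC1^[l] φ) 0 := by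
  refine ⟨fun l => bco k 0 l, ?_, ?_, ?_⟩
  · have := bco_top k 0
    simpa using this
  · exact bco_bot k hk 0
  · intro φ hφ
    set T : ℕ → ℕ → ℂ := fun j m => lapC1^[m] (kLapFS1^[j] φ) 0 with hT
    have h0 : ∀ m, T 0 m = lapC1^[m] φ 0 := fun m => rfl
    have hrec : ∀ j m, T (j+1) m = T j (m+1) + 2*(m : ℂ)^2 * T j m
        + (m : ℂ)^2 * ((m-1 : ℕ) : ℂ)^2 * T j (m-1) := by
      intro j m
      have hfj : ContDiff ℝ (⊤ : ℕ∞) (kLapFS1^[j] φ) := kLap_iter_smooth hφ j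
      have hstep := step (kLapFS1^[j] φ) hfj m
      have hiter : T (j+1) m = lapC1^[m] (kLapFS1 (kLapFS1^[j] φ)) 0 := by
        show lapC1^[m] (kLapFS1^[j+1] φ) 0 = _
        rw [Function.iterate_succ_apply']
      rw [hiter, hstep]
      -- identify the iterated Laplacians with T j at shifted indices
      have e1 : lapC1^[m] (lapC1 (kLapFS1^[j] φ)) 0 = T j (m+1) :=
        congrFun (Function.iterate_succ_apply lapC1 m (kLapFS1^[j] φ)).symm 0
      match m with
      | 0 =>
        rw [e1]
        push_cast
        ring
      | 1 =>
        rw [e1]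
        have e2 : lapC1^[0] (lapC1 (kLapFS1^[j] φ)) 0 = T j 1 :=
          congrFun (Function.iterate_succ_apply lapC1 0 (kLapFS1^[j] φ)).symm 0
        rw [e2]
        push_cast
        ring
      | (n+2) =>
        have h1 : n + 2 - 1 = n + 1 := by omega
        have h2 : n + 2 - 1 - 1 = n := by omega
        rw [h1, h2] at *
        rw [e1]
        have e2 : lapC1^[n+1] (lapC1 (kLapFS1^[j] φ)) 0 = T j (n+2) :=
          congrFun (Function.iterate_succ_apply lapC1 (n+1) (kLapFS1^[j] φ)).symm 0
        have e3 : lapC1^[n] (lapC1 (kLapFS1^[j] φ)) 0 = T j (n+1) :=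
          congrFun (Function.iterate_succ_apply lapC1 n (kLapFS1^[j] φ)).symm 0
        rw [e2, e3]
        push_cast
        ring
    have := coeff_expand (fun m => lapC1^[m] φ 0) T h0 hrec k 0
    simpa [hT] using this
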